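/- There is an absolute constant C > 0 such that the following holds in the toy gadget setting whenever K ≥ C. There exists a set M* ⊆ {(k,u,v) : k ∈ [K/2] and (u,v) ∈ E_{k,J_k}} such that: any two distinct triples (k,u,v), (k',u',v') ∈ M* satisfy (k,u) ≠ (k',u') and v ≠ v'; every (k,u,v) ∈ M* has v ∈ [m]^n ∖ T_*; and |M*| ≥ (1 − C/K)·Σ_{k∈[K/2]} |S̃_k|. In other words, the bipartite graph whose left vertex set is the disjoint union of the sets S̃_k over k ∈ [K/2], whose right vertex set is [m]^n, and whose edges are given by the sets E_{k,J_k}, contains a matching of a (1 − O(1/K)) fraction of the left vertices into [m]^n ∖ T_*. -/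

import Mathlib

/-- The weight of a point of the cube `[m]^n`. -/
def wt {n m : ℕ} (x : Fin n → Fin m) : ℕ := ∑ j, (x j : ℕ)

/-- The nested sets `T_k` of the toy gadget: `T_k = {y ∈ [m]^n :
y_{J_s} < m − m/(K−s) for all s < k}`. -/
def Tset (n m K : ℕ) (J : ℕ → Fin n) (k : ℕ) : Set (Fin n → Fin m) :=
  {y | ∀ s < k, (y (J s) : ℕ) < m - m / (K - s)}

/-- The label sets `S̃_k = {x ∈ T_k : wt(x) mod W < W/(K−k)}`. -/
def Sset (n m K W : ℕ) (J : ℕ → Fin n) (k : ℕ) : Set (Fin n → Fin m) :=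
  {x | x ∈ Tset n m K J k ∧ wt x % W < W / (K - k)}

/-- `T_k^j = {y ∈ T_k : y_j < m − m/(K−k)}`. -/
def Tj (n m K : ℕ) (J : ℕ → Fin n) (k : ℕ) (j : Fin n) : Set (Fin n → Fin m) :=
  {y | y ∈ Tset n m K J k ∧ (y j : ℕ) < m - m / (K - k)}

/-- `S̃_k^j = {x ∈ S̃_k : x_j < m − m/(K−k)}`. -/
def Sj (n m K W : ℕ) (J : ℕ → Fin n) (k : ℕ) (j : Fin n) : Set (Fin n → Fin m) :=
  {x | x ∈ Sset n m K W J k ∧ (x j : ℕ) < m - m / (K - k)}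

/-- The coordinate line through `x` in direction `j`. -/
def lineSet {n m : ℕ} (j : Fin n) (x : Fin n → Fin m) : Set (Fin n → Fin m) :=
  {x' | ∀ i, i ≠ j → x' i = x i}

/-- The edge set `E_{k,j} = {(u,v) ∈ S̃_k^j × (T_k ∖ T_k^j) : u_i = v_i for all i ≠ j}`. -/
def Eset (n m K W : ℕ) (J : ℕ → Fin n) (k : ℕ) (j : Fin n) :
    Set ((Fin n → Fin m) × (Fin n → Fin m)) :=
  {p | p.1 ∈ Sj n m K W J k j ∧ p.2 ∈ Tset n m K J k \ Tj n m K J k j ∧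
    ∀ i, i ≠ j → p.1 i = p.2 i}

-- auxiliary development
private lemma quot_rem_cancel {w a b r s : ℕ} (h : a * w + r = b * w + s)
    (hr : r < w) (hs : s < w) : a = b ∧ r = s := by
  have hab : a = b := by
    rcases Nat.lt_trichotomy a b with h' | h' | h'
    · exfalso; nlinarith
    · exact h'
    · exfalso; nlinarith
  subst hab
  exact ⟨rfl, Nat.add_left_cancel h⟩

private lemma gadget_arith {d W m : ℕ} (hd : 0 < d) (hW : 0 < W) (hm : 0 < m)
    (h1 : d ∣ W) (h2 : d ∣ m) (h3 : W ∣ m / d) :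
    ∃ w q, 0 < w ∧ 0 < q ∧ W = d * w ∧
      m / d = d * w * q ∧ W / d = w ∧ m / d / W = q ∧
      m - m / d = (d - 1) * q * W ∧ (m - m / d) / W = (d - 1) * q ∧
      m = d * q * W := by
  obtain ⟨w, hw⟩ := h1
  obtain ⟨q, hq⟩ := h3
  have hmd : d * (m / d) = m := Nat.mul_div_cancel' h2
  have hw0 : 0 < w := by
    rcases Nat.eq_zero_or_pos w with h | h
    · rw [h, Nat.mul_zero] at hw; omega
    · exact h
  have hq0 : 0 < q := by
    rcases Nat.eq_zero_or_pos q with h | h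
    · rw [h, Nat.mul_zero] at hq; rw [hq, Nat.mul_zero] at hmd; omega
    · exact h
  have hmdq : m / d = d * w * q := by rw [hq, hw]
  have hWd : W / d = w := by rw [hw]; exact Nat.mul_div_cancel_left w hd
  have hmdW : m / d / W = q := by rw [hq]; exact Nat.mul_div_cancel_left q hW
  have hMsub : m - m / d = (d - 1) * q * W := by
    apply Nat.sub_eq_of_eq_add
    obtain ⟨e, rfl⟩ : ∃ e, d = e + 1 := ⟨d - 1, by omega⟩
    have h1' : e + 1 - 1 = e := by omega
    rw [h1', hmdq, hw, ← hmd, hmdq]; ring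
  have hMW : (m - m / d) / W = (d - 1) * q := by
    rw [hMsub]; exact Nat.mul_div_cancel _ hW
  have hmW : m = d * q * W := by rw [← hmd, hmdq, hw]; ring
  exact ⟨w, q, hw0, hq0, hw, hmdq, hWd, hmdW, hMsub, hMW, hmW⟩

open Finset in
private lemma wt_eq_add {n m : ℕ} (u : Fin n → Fin m) (j : Fin n) :
    wt u = (u j : ℕ) + ∑ i ∈ Finset.univ.erase j, (u i : ℕ) :=
  (Finset.add_sum_erase _ _ (Finset.mem_univ j)).symm

private lemma wt_update {n m : ℕ} (u : Fin n → Fin m) (j : Fin n) (c : Fin m) :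
    wt (Function.update u j c) = (c : ℕ) + ∑ i ∈ Finset.univ.erase j, (u i : ℕ) := by
  rw [wt_eq_add _ j, Function.update_self]
  congr 1
  refine Finset.sum_congr rfl (fun i hi => ?_)
  rw [Function.update_of_ne (Finset.ne_of_mem_erase hi)]

/-- The matching map: push coordinate `J k` into the top window. -/
def phi (n m K W : ℕ) (J : ℕ → Fin n) (k : ℕ) (u : Fin n → Fin m) : Fin n → Fin m :=
  Function.update u (J k)
    ⟨(m - m / (K - k) + (u (J k) : ℕ) / W * (W / (K - k)) + wt u % W) % m,
      Nat.mod_lt _ (u (J k)).pos⟩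

private lemma phi_val (n m K W : ℕ) (J : ℕ → Fin n) (k : ℕ)
    (hW : 0 < W) (hm : 0 < m) (hk2 : k < K / 2)
    (hd1 : (K - k) ∣ W) (hd2 : (K - k) ∣ m) (hd3 : W ∣ m / (K - k))
    (u : Fin n → Fin m) (hu : u ∈ Sj n m K W J k (J k)) :
    ((phi n m K W J k u) (J k) : ℕ) =
      m - m / (K - k) + (u (J k) : ℕ) / W * (W / (K - k)) + wt u % W := by
  have hd0 : 0 < K - k := by omega
  obtain ⟨w, q, hw0, hq0, hWe, hmd, hWd, hmdW, hM, hMW, hmW⟩ :=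
    gadget_arith hd0 hW hm hd1 hd2 hd3
  obtain ⟨⟨hT, hρ⟩, ha⟩ := hu
  have hρ' : wt u % W < w := by rwa [hWd] at hρ
  have ht : (u (J k) : ℕ) / W < (K - k - 1) * q := by
    rw [Nat.div_lt_iff_lt_mul hW]
    rw [hM] at ha; exact ha
  have h5 : (u (J k) : ℕ) / W + 1 ≤ (K - k) * q :=
    le_trans ht (Nat.mul_le_mul_right _ (Nat.sub_le _ _))
  have h6 : ((u (J k) : ℕ) / W + 1) * w ≤ (K - k) * q * w := Nat.mul_le_mul_right _ h5
  have hbud : (u (J k) : ℕ) / W * w + wt u % W < m / (K - k) := by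
    calc (u (J k) : ℕ) / W * w + wt u % W
        < (u (J k) : ℕ) / W * w + w := Nat.add_lt_add_left hρ' _
      _ = ((u (J k) : ℕ) / W + 1) * w := by rw [add_one_mul]
      _ ≤ (K - k) * q * w := h6
      _ = m / (K - k) := by rw [hmd, mul_right_comm]
  have hkey : m - m / (K - k) + (u (J k) : ℕ) / W * (W / (K - k)) + wt u % W < m := by
    rw [hWd]
    calc m - m / (K - k) + (u (J k) : ℕ) / W * w + wt u % W
        = m - m / (K - k) + ((u (J k) : ℕ) / W * w + wt u % W) := by
          rw [Nat.add_assoc]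
      _ < m - m / (K - k) + m / (K - k) := Nat.add_lt_add_left hbud _
      _ = m := Nat.sub_add_cancel (Nat.div_le_self m (K - k))
  show ((Function.update u (J k) _ : Fin n → Fin m) (J k) : ℕ) = _
  rw [Function.update_self]
  exact Nat.mod_eq_of_lt hkey

private lemma phi_edge (n m K W : ℕ) (J : ℕ → Fin n) (k : ℕ)
    (hW : 0 < W) (hm : 0 < m) (hk2 : k < K / 2)
    (hd1 : (K - k) ∣ W) (hd2 : (K - k) ∣ m) (hd3 : W ∣ m / (K - k))
    (hJ : ∀ s < K / 2, ∀ t < K / 2, s ≠ t → J s ≠ J t)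
    (u : Fin n → Fin m) (hu : u ∈ Sj n m K W J k (J k)) :
    (u, phi n m K W J k u) ∈ Eset n m K W J k (J k) ∧
      phi n m K W J k u ∉ Tset n m K J (K / 2) := by
  have hval := phi_val n m K W J k hW hm hk2 hd1 hd2 hd3 u hu
  have hge : m - m / (K - k) ≤ ((phi n m K W J k u) (J k) : ℕ) := by
    rw [hval]
    exact le_trans (Nat.le_add_right _ _) (Nat.le_add_right _ _)
  have hoff : ∀ i, i ≠ J k → phi n m K W J k u i = u i := fun i hi =>
    Function.update_of_ne hi _ _
  have hTmem : phi n m K W J k u ∈ Tset n m K J k := by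
    intro s hs
    rw [hoff (J s) (hJ s (lt_trans hs hk2) k hk2 (Nat.ne_of_lt hs))]
    exact hu.1.1 s hs
  refine ⟨⟨hu, ⟨hTmem, ?_⟩, ?_⟩, ?_⟩
  · intro hTj
    exact absurd hTj.2 (not_lt.mpr hge)
  · intro i hi
    exact (hoff i hi).symm
  · intro hT
    exact absurd (hT k hk2) (not_lt.mpr hge)

private lemma phi_inj (n m K W : ℕ) (J : ℕ → Fin n) (k : ℕ)
    (hW : 0 < W) (hm : 0 < m) (hk2 : k < K / 2)
    (hd1 : (K - k) ∣ W) (hd2 : (K - k) ∣ m) (hd3 : W ∣ m / (K - k))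
    (u u' : Fin n → Fin m) (hu : u ∈ Sj n m K W J k (J k))
    (hu' : u' ∈ Sj n m K W J k (J k))
    (h : phi n m K W J k u = phi n m K W J k u') : u = u' := by
  have hoff : ∀ i, i ≠ J k → u i = u' i := by
    intro i hi
    have := congrFun h i
    rwa [phi, phi, Function.update_of_ne hi, Function.update_of_ne hi] at this
  have hval := phi_val n m K W J k hW hm hk2 hd1 hd2 hd3 u hu
  have hval' := phi_val n m K W J k hW hm hk2 hd1 hd2 hd3 u' hu'
  have hvv : ((phi n m K W J k u) (J k) : ℕ) = ((phi n m K W J k u') (J k) : ℕ) := by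
    rw [h]
  rw [hval, hval'] at hvv
  rw [Nat.add_assoc, Nat.add_assoc] at hvv
  have hvv2 := Nat.add_left_cancel hvv
  obtain ⟨hq, hr⟩ := quot_rem_cancel hvv2 hu.1.2 hu'.1.2
  -- now recover the coordinate value
  have hsum : ∑ i ∈ Finset.univ.erase (J k), (u i : ℕ)
      = ∑ i ∈ Finset.univ.erase (J k), (u' i : ℕ) :=
    Finset.sum_congr rfl fun i hi => by rw [hoff i (Finset.ne_of_mem_erase hi)]
  have hmodW : (u (J k) : ℕ) % W = (u' (J k) : ℕ) % W := by
    have h1 : ((u (J k) : ℕ) + ∑ i ∈ Finset.univ.erase (J k), (u i : ℕ)) % W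
        = ((u' (J k) : ℕ) + ∑ i ∈ Finset.univ.erase (J k), (u i : ℕ)) % W := by
      rw [← wt_eq_add]
      conv_rhs => rw [hsum, ← wt_eq_add]
      exact hr
    exact Nat.ModEq.add_right_cancel' _ h1
  have hcoord : (u (J k) : ℕ) = (u' (J k) : ℕ) := by
    calc (u (J k) : ℕ) = W * ((u (J k) : ℕ) / W) + (u (J k) : ℕ) % W :=
          (Nat.div_add_mod _ _).symm
      _ = W * ((u' (J k) : ℕ) / W) + (u' (J k) : ℕ) % W := by rw [hq, hmodW]
      _ = (u' (J k) : ℕ) := Nat.div_add_mod _ _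
  funext i
  by_cases hi : i = J k
  · subst hi; exact Fin.ext hcoord
  · exact Fin.ext (by rw [hoff i hi])

/-- The spreading map used for the counting estimate. -/
def psi (n m K W : ℕ) (J : ℕ → Fin n) (k t : ℕ) (u : Fin n → Fin m) : Fin n → Fin m :=
  Function.update u (J k)
    ⟨((t * (m / (K - k) / W) + ((u (J k) : ℕ) / W - (m - m / (K - k)) / W)) * W
        + (u (J k) : ℕ) % W) % m,
      Nat.mod_lt _ (u (J k)).pos⟩

private lemma psi_spec (n m K W : ℕ) (J : ℕ → Fin n) (k t : ℕ)
    (hW : 0 < W) (hm : 0 < m) (hk2 : k < K / 2)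
    (hd1 : (K - k) ∣ W) (hd2 : (K - k) ∣ m) (hd3 : W ∣ m / (K - k))
    (hJ : ∀ s < K / 2, ∀ t < K / 2, s ≠ t → J s ≠ J t)
    (ht : t < K - k)
    (u : Fin n → Fin m) (hu : u ∈ Sset n m K W J k)
    (hbad : ¬ ((u (J k) : ℕ) < m - m / (K - k))) :
    ((psi n m K W J k t u) (J k) : ℕ)
        = (t * (m / (K - k) / W) + ((u (J k) : ℕ) / W - (m - m / (K - k)) / W)) * W
          + (u (J k) : ℕ) % W
      ∧ psi n m K W J k t u ∈ Sset n m K W J k := by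
  have hd0 : 0 < K - k := by omega
  obtain ⟨w, q, hw0, hq0, hWe, hmd, hWd, hmdW, hM, hMW, hmW⟩ :=
    gadget_arith hd0 hW hm hd1 hd2 hd3
  have hcge : m - m / (K - k) ≤ (u (J k) : ℕ) := not_lt.mp hbad
  have hB : (K - k - 1) * q ≤ (u (J k) : ℕ) / W := by
    rw [← hMW]; exact Nat.div_le_div_right hcge
  have hchi : (u (J k) : ℕ) / W < (K - k) * q := by
    rw [Nat.div_lt_iff_lt_mul hW, ← hmW]; exact (u (J k)).isLt
  have hdq : (K - k - 1) * q + q = (K - k) * q := by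
    obtain ⟨e, he⟩ : ∃ e, K - k = e + 1 := ⟨K - k - 1, by omega⟩
    rw [he, Nat.add_sub_cancel, add_one_mul]
  have hs : (u (J k) : ℕ) / W - (K - k - 1) * q < q := by
    rw [Nat.sub_lt_iff_lt_add hB, Nat.add_comm q, hdq]; exact hchi
  have hidx : t * (m / (K - k) / W) + ((u (J k) : ℕ) / W - (m - m / (K - k)) / W)
      < (K - k) * q := by
    rw [hmdW, hMW]
    calc t * q + ((u (J k) : ℕ) / W - (K - k - 1) * q)
        < t * q + q := Nat.add_lt_add_left hs _
      _ = (t + 1) * q := by rw [add_one_mul]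
      _ ≤ (K - k) * q := Nat.mul_le_mul_right _ ht
  have hval : (t * (m / (K - k) / W) + ((u (J k) : ℕ) / W - (m - m / (K - k)) / W)) * W
      + (u (J k) : ℕ) % W < m := by
    calc (t * (m / (K - k) / W) + ((u (J k) : ℕ) / W - (m - m / (K - k)) / W)) * W
          + (u (J k) : ℕ) % W
        < (t * (m / (K - k) / W) + ((u (J k) : ℕ) / W - (m - m / (K - k)) / W)) * W
          + W := Nat.add_lt_add_left (Nat.mod_lt _ hW) _
      _ = (t * (m / (K - k) / W) + ((u (J k) : ℕ) / W - (m - m / (K - k)) / W) + 1) * W := by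
          rw [add_one_mul]
      _ ≤ (K - k) * q * W := Nat.mul_le_mul_right _ hidx
      _ = m := hmW.symm
  have hveq : ((psi n m K W J k t u) (J k) : ℕ)
      = (t * (m / (K - k) / W) + ((u (J k) : ℕ) / W - (m - m / (K - k)) / W)) * W
        + (u (J k) : ℕ) % W := by
    show ((Function.update u (J k) _ : Fin n → Fin m) (J k) : ℕ) = _
    rw [Function.update_self]
    exact Nat.mod_eq_of_lt hval
  refine ⟨hveq, ?_, ?_⟩
  · -- Tset membership
    intro s hs'
    have hne : J s ≠ J k := hJ s (lt_trans hs' hk2) k hk2 (Nat.ne_of_lt hs')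
    show ((Function.update u (J k) _ : Fin n → Fin m) (J s) : ℕ) < _
    rw [Function.update_of_ne hne]
    exact hu.1 s hs'
  · -- residue condition
    have hmodv : ((psi n m K W J k t u) (J k) : ℕ) % W = (u (J k) : ℕ) % W := by
      rw [hveq, Nat.add_comm, Nat.add_mul_mod_self_right]
      exact Nat.mod_eq_of_lt (Nat.mod_lt _ hW)
    have h1 : wt (psi n m K W J k t u)
        = ((psi n m K W J k t u) (J k) : ℕ) + ∑ i ∈ Finset.univ.erase (J k), (u i : ℕ) := by
      rw [wt_eq_add _ (J k)]
      congr 1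
      refine Finset.sum_congr rfl (fun i hi => ?_)
      show ((Function.update u (J k) _ : Fin n → Fin m) i : ℕ) = _
      rw [Function.update_of_ne (Finset.ne_of_mem_erase hi)]
    have h2 : wt (psi n m K W J k t u) % W = wt u % W := by
      rw [h1, wt_eq_add u (J k)]
      exact Nat.ModEq.add_right _ hmodv
    rw [h2]
    exact hu.2

private lemma count_bad (n m K W : ℕ) (J : ℕ → Fin n) (k : ℕ)
    (hW : 0 < W) (hm : 0 < m) (hk2 : k < K / 2)
    (hd1 : (K - k) ∣ W) (hd2 : (K - k) ∣ m) (hd3 : W ∣ m / (K - k))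
    (hJ : ∀ s < K / 2, ∀ t < K / 2, s ≠ t → J s ≠ J t) :
    (K - k) * (Sset n m K W J k \ Sj n m K W J k (J k)).ncard
      ≤ (Sset n m K W J k).ncard := by
  have hd0 : 0 < K - k := by omega
  obtain ⟨w, q, hw0, hq0, hWe, hmd, hWd, hmdW, hM, hMW, hmW⟩ :=
    gadget_arith hd0 hW hm hd1 hd2 hd3
  classical
  set D := Sset n m K W J k \ Sj n m K W J k (J k) with hD
  have hmemD : ∀ u ∈ D, u ∈ Sset n m K W J k ∧ ¬ ((u (J k) : ℕ) < m - m / (K - k)) := by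
    intro u hu
    refine ⟨hu.1, fun hlt => hu.2 ⟨hu.1, hlt⟩⟩
  have hBle : ∀ u ∈ D, (K - k - 1) * q ≤ (u (J k) : ℕ) / W := by
    intro u hu
    rw [← hMW]
    exact Nat.div_le_div_right (not_lt.mp (hmemD u hu).2)
  have hSlt : ∀ u ∈ D, (u (J k) : ℕ) / W - (K - k - 1) * q < q := by
    intro u hu
    have hchi : (u (J k) : ℕ) / W < (K - k) * q := by
      rw [Nat.div_lt_iff_lt_mul hW, ← hmW]; exact (u (J k)).isLt
    have hdq : (K - k - 1) * q + q = (K - k) * q := by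
      obtain ⟨e, he⟩ : ∃ e, K - k = e + 1 := ⟨K - k - 1, by omega⟩
      rw [he, Nat.add_sub_cancel, add_one_mul]
    rw [Nat.sub_lt_iff_lt_add (hBle u hu), Nat.add_comm q, hdq]; exact hchi
  -- the map
  let F : ↥D × Fin (K - k) → ↥(Sset n m K W J k) := fun p =>
    ⟨psi n m K W J k (p.2 : ℕ) (p.1 : Fin n → Fin m),
      (psi_spec n m K W J k (p.2 : ℕ) hW hm hk2 hd1 hd2 hd3 hJ p.2.isLt
        (p.1 : Fin n → Fin m) (hmemD _ p.1.2).1 (hmemD _ p.1.2).2).2⟩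
  have hinj : Function.Injective F := by
    rintro ⟨⟨u, hu⟩, t⟩ ⟨⟨u', hu'⟩, t'⟩ hFeq
    have heq : psi n m K W J k (t : ℕ) u = psi n m K W J k (t' : ℕ) u' :=
      congrArg Subtype.val hFeq
    have hoff : ∀ i, i ≠ J k → u i = u' i := by
      intro i hi
      have := congrFun heq i
      rwa [psi, psi, Function.update_of_ne hi, Function.update_of_ne hi] at this
    have hv := (psi_spec n m K W J k (t : ℕ) hW hm hk2 hd1 hd2 hd3 hJ t.isLt
      u (hmemD _ hu).1 (hmemD _ hu).2).1
    have hv' := (psi_spec n m K W J k (t' : ℕ) hW hm hk2 hd1 hd2 hd3 hJ t'.isLt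
      u' (hmemD _ hu').1 (hmemD _ hu').2).1
    have hvv : ((psi n m K W J k (t : ℕ) u) (J k) : ℕ)
        = ((psi n m K W J k (t' : ℕ) u') (J k) : ℕ) := by rw [heq]
    rw [hv, hv'] at hvv
    rw [hmdW, hMW] at hvv
    obtain ⟨hidx, hmod⟩ := quot_rem_cancel hvv (Nat.mod_lt _ hW) (Nat.mod_lt _ hW)
    obtain ⟨hteq, hSeq⟩ := quot_rem_cancel hidx (hSlt u hu) (hSlt u' hu')
    have hdiv : (u (J k) : ℕ) / W = (u' (J k) : ℕ) / W := by
      have e1 := Nat.sub_add_cancel (hBle u hu)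
      have e2 := Nat.sub_add_cancel (hBle u' hu')
      rw [← e1, ← e2, hSeq]
    have hcoord : (u (J k) : ℕ) = (u' (J k) : ℕ) := by
      calc (u (J k) : ℕ) = W * ((u (J k) : ℕ) / W) + (u (J k) : ℕ) % W :=
            (Nat.div_add_mod _ _).symm
        _ = W * ((u' (J k) : ℕ) / W) + (u' (J k) : ℕ) % W := by rw [hdiv, hmod]
        _ = (u' (J k) : ℕ) := Nat.div_add_mod _ _
    have huu : u = u' := by
      funext i
      by_cases hi : i = J k
      · subst hi; exact Fin.ext hcoord
      · exact Fin.ext (by rw [hoff i hi])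
    subst huu
    have htt : t = t' := Fin.ext hteq
    subst htt
    rfl
  have hcard := Nat.card_le_card_of_injective F hinj
  rw [Nat.card_prod] at hcard
  rw [Nat.card_coe_set_eq, Nat.card_coe_set_eq, Nat.card_eq_fintype_card,
    Fintype.card_fin] at hcard
  rw [mul_comm]
  exact hcard

private lemma real_step {Kr x y b : ℝ} (hK : 0 < Kr) (hxy : b + y = x)
    (hb : Kr * b ≤ 2 * x) : (1 - 2 / Kr) * x ≤ y := by
  have h3 : b ≤ 2 * x / Kr := by rw [le_div_iff₀ hK]; nlinarith
  have h4 : (1 - 2 / Kr) * x = x - 2 * x / Kr := by ring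
  linarith

/-- There is an absolute constant `C > 0` such that in the toy gadget
setting with `K ≥ C` the bipartite graph with left vertices the disjoint union of the
sets `S̃_k` (`k ∈ [K/2]`), right vertices `[m]^n`, and edges the sets `E_{k,J_k}`,
contains a matching of a `(1 − C/K)` fraction of the left vertices into `[m]^n ∖ T_*`. -/
theorem stmt_6 :
    ∃ C : ℕ, 0 < C ∧
      ∀ (n m K W : ℕ) (J : ℕ → Fin n),
        0 < n → 0 < m → 0 < W → 2 ≤ K → Even K → C ≤ K →
        (∀ s < K / 2, (K - s) ∣ W ∧ (K - s) ∣ m ∧ W ∣ m / (K - s)) →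
        (∀ s < K / 2, ∀ t < K / 2, s ≠ t → J s ≠ J t) →
        ∃ Mstar : Set (ℕ × (Fin n → Fin m) × (Fin n → Fin m)),
          (∀ e ∈ Mstar, e.1 < K / 2 ∧ e.2 ∈ Eset n m K W J e.1 (J e.1)) ∧
          (∀ e ∈ Mstar, ∀ e' ∈ Mstar, e ≠ e' →
            (e.1, e.2.1) ≠ (e'.1, e'.2.1) ∧ e.2.2 ≠ e'.2.2) ∧
          (∀ e ∈ Mstar, e.2.2 ∉ Tset n m K J (K / 2)) ∧
          (1 - (C : ℝ) / (K : ℝ)) *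
              ∑ k ∈ Finset.range (K / 2), ((Sset n m K W J k).ncard : ℝ) ≤
            (Mstar.ncard : ℝ) := by
  classical
  refine ⟨2, by norm_num, ?_⟩
  intro n m K W J hn hm hW hK2 hKeven hCK hdvd hJ
  set A : ℕ → Finset (Fin n → Fin m) :=
    fun k => (Set.toFinite (Sj n m K W J k (J k))).toFinset with hA
  set Mfin : Finset (ℕ × (Fin n → Fin m) × (Fin n → Fin m)) :=
    (Finset.range (K / 2)).biUnion
      (fun k => (A k).image (fun u => (k, u, phi n m K W J k u))) with hMfin
  have hmem : ∀ e ∈ Mfin, ∃ k, k < K / 2 ∧ ∃ u, u ∈ Sj n m K W J k (J k) ∧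
      (k, u, phi n m K W J k u) = e := by
    intro e he
    simp only [hMfin, Finset.mem_biUnion, Finset.mem_range, Finset.mem_image, hA,
      Set.Finite.mem_toFinset] at he
    obtain ⟨k, hk, u, hu, hue⟩ := he
    exact ⟨k, hk, u, hu, hue⟩
  have hedge : ∀ k, k < K / 2 → ∀ u ∈ Sj n m K W J k (J k),
      (u, phi n m K W J k u) ∈ Eset n m K W J k (J k) ∧
        phi n m K W J k u ∉ Tset n m K J (K / 2) := by
    intro k hk u hu
    exact phi_edge n m K W J k hW hm hk (hdvd k hk).1 (hdvd k hk).2.1 (hdvd k hk).2.2 hJ u hu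
  have hcross : ∀ k k', k < k' → k' < K / 2 → ∀ u u',
      u ∈ Sj n m K W J k (J k) → u' ∈ Sj n m K W J k' (J k') →
      phi n m K W J k u ≠ phi n m K W J k' u' := by
    intro k k' hlt hk' u u' hu hu' heq
    have hk : k < K / 2 := lt_trans hlt hk'
    have he1 := (hedge k hk u hu).1
    have he2 := (hedge k' hk' u' hu').1
    have hlow : ((phi n m K W J k' u') (J k) : ℕ) < m - m / (K - k) :=
      he2.2.1.1 k hlt
    have hnot : phi n m K W J k u ∉ Tj n m K J k (J k) := he1.2.1.2
    have hge2 : ¬ ((phi n m K W J k u) (J k) : ℕ) < m - m / (K - k) :=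
      fun hlt2 => hnot ⟨he1.2.1.1, hlt2⟩
    rw [heq] at hge2
    exact hge2 hlow
  refine ⟨↑Mfin, ?_, ?_, ?_, ?_⟩
  · intro e he
    obtain ⟨k, hk, u, hu, rfl⟩ := hmem e (Finset.mem_coe.mp he)
    exact ⟨hk, (hedge k hk u hu).1⟩
  · intro e he e' he' hne
    obtain ⟨k, hk, u, hu, rfl⟩ := hmem e (Finset.mem_coe.mp he)
    obtain ⟨k', hk', u', hu', rfl⟩ := hmem e' (Finset.mem_coe.mp he')
    constructor
    · intro hpp
      have h1 : k = k' := congrArg Prod.fst hpp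
      have h2 : u = u' := congrArg Prod.snd hpp
      subst h1; subst h2; exact hne rfl
    · intro hv
      simp only at hv
      by_cases hkk : k = k'
      · subst hkk
        have huu : u = u' := phi_inj n m K W J k hW hm hk
          (hdvd k hk).1 (hdvd k hk).2.1 (hdvd k hk).2.2 u u' hu hu' hv
        exact hne (by rw [huu])
      · rcases Nat.lt_or_ge k k' with hlt | hge
        · exact hcross k k' hlt hk' u u' hu hu' hv
        · have hlt : k' < k := by omega
          exact hcross k' k hlt hk u' u hu' hu hv.symm
  · intro e he
    obtain ⟨k, hk, u, hu, rfl⟩ := hmem e (Finset.mem_coe.mp he)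
    exact (hedge k hk u hu).2
  · -- cardinality bound
    have hdisj : ∀ x ∈ Finset.range (K / 2), ∀ y ∈ Finset.range (K / 2), x ≠ y →
        Disjoint ((A x).image (fun u => (x, u, phi n m K W J x u)))
          ((A y).image (fun u => (y, u, phi n m K W J y u))) := by
      intro x hx y hy hxy
      rw [Finset.disjoint_left]
      rintro a ha hb
      obtain ⟨u, hu, rfl⟩ := Finset.mem_image.mp ha
      obtain ⟨u', hu', he⟩ := Finset.mem_image.mp hb
      exact hxy (congrArg Prod.fst he).symm
    have hMcard : (↑Mfin : Set (ℕ × (Fin n → Fin m) × (Fin n → Fin m))).ncard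
        = ∑ k ∈ Finset.range (K / 2), (Sj n m K W J k (J k)).ncard := by
      rw [Set.ncard_coe_finset, hMfin, Finset.card_biUnion hdisj]
      refine Finset.sum_congr rfl (fun k hk => ?_)
      rw [Finset.card_image_of_injective _ (fun a b h => congrArg (fun p => p.2.1) h)]
      simp only [hA]
      exact (Set.ncard_eq_toFinset_card _ _).symm
    have hK0 : (0 : ℝ) < (K : ℝ) := by
      have : 0 < K := by omega
      exact_mod_cast this
    have key : ∀ k ∈ Finset.range (K / 2),
        (1 - 2 / (K : ℝ)) * ((Sset n m K W J k).ncard : ℝ)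
          ≤ ((Sj n m K W J k (J k)).ncard : ℝ) := by
      intro k hk
      rw [Finset.mem_range] at hk
      have hd := hdvd k hk
      have hsub : Sj n m K W J k (J k) ⊆ Sset n m K W J k := fun x hx => hx.1
      have hsplit := Set.ncard_diff_add_ncard_of_subset hsub
      have hcount := count_bad n m K W J k hW hm hk hd.1 hd.2.1 hd.2.2 hJ
      have hKd : K ≤ 2 * (K - k) := by omega
      have hKb : K * (Sset n m K W J k \ Sj n m K W J k (J k)).ncard
          ≤ 2 * (Sset n m K W J k).ncard := by
        calc K * (Sset n m K W J k \ Sj n m K W J k (J k)).ncard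
            ≤ 2 * (K - k) * (Sset n m K W J k \ Sj n m K W J k (J k)).ncard :=
              Nat.mul_le_mul_right _ hKd
          _ = 2 * ((K - k) * (Sset n m K W J k \ Sj n m K W J k (J k)).ncard) := by
              rw [mul_assoc]
          _ ≤ 2 * (Sset n m K W J k).ncard := Nat.mul_le_mul_left _ hcount
      refine real_step (b := ((Sset n m K W J k \ Sj n m K W J k (J k)).ncard : ℝ)) hK0 ?_ ?_
      · exact_mod_cast hsplit
      · exact_mod_cast hKb
    simp only [Nat.cast_ofNat]
    calc (1 - 2 / (K : ℝ)) * ∑ k ∈ Finset.range (K / 2), ((Sset n m K W J k).ncard : ℝ)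
        = ∑ k ∈ Finset.range (K / 2),
            (1 - 2 / (K : ℝ)) * ((Sset n m K W J k).ncard : ℝ) := Finset.mul_sum _ _ _
      _ ≤ ∑ k ∈ Finset.range (K / 2), ((Sj n m K W J k (J k)).ncard : ℝ) :=
          Finset.sum_le_sum key
      _ = (((↑Mfin : Set (ℕ × (Fin n → Fin m) × (Fin n → Fin m))).ncard : ℝ)) := by
          rw [hMcard]
          push_cast
          ring
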